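/- (Singular-value hard-thresholding solves rank penalization) Let Y ∈ ℝ^{n×m} with singular value decomposition Y = U diag(σ_i(Y)) Vᵀ and let λ > 0 be such that no singular value of Y equals λ. Then B̂ = U diag(σ_i(Y)·1_{σ_i(Y)>λ}) Vᵀ is the unique global minimizer over B ∈ ℝ^{n×m} of ‖Y−B‖_F²/2 + (λ²/2)·rank(B). -/

import Mathlib

/-!
Let `Q` have orthonormal columns spanning the column space of `B`, so that `B = Q Qᵀ B` and
`rank B = ‖Q‖²`, and let `tᵢ = ‖Qᵀ uᵢ‖² ∈ [0, 1]` be the part of the `i`-th left singular vector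
captured by that space. Splitting `Y - B` along `Q` and `Q` along `U` (Pythagoras) gives
`‖Y - B‖² + λ² rank B = ∑ᵢ (σᵢ² (1 - tᵢ) + λ² tᵢ) + ‖Q Qᵀ Y - B‖² + λ² ‖Q - U Uᵀ Q‖²`,
and each summand of the first sum is at least `min (σᵢ², λ²)`, whose sum is the value at `B̂`.
In case of equality `B = Q Qᵀ Y` and, as `σᵢ ≠ λ`, `tᵢ = 1_{σᵢ > λ}`: `Q Qᵀ` fixes the `uᵢ` with
`σᵢ > λ` and kills the others, so `B = B̂`.
-/

open Matrix

/-- Squared Frobenius norm of a real matrix. -/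
def frobSq {n m : ℕ} (A : Matrix (Fin n) (Fin m) ℝ) : ℝ := ∑ i, ∑ j, A i j ^ 2

/-- `(U, σ, V)` is a (reduced) singular value decomposition of the real `n × m` matrix `B`. -/
def IsSVD {n m k : ℕ} (B : Matrix (Fin n) (Fin m) ℝ) (U : Matrix (Fin n) (Fin k) ℝ)
    (σ : Fin k → ℝ) (V : Matrix (Fin m) (Fin k) ℝ) : Prop :=
  Uᵀ * U = 1 ∧ Vᵀ * V = 1 ∧ Antitone σ ∧ (∀ i, 0 ≤ σ i) ∧ B = U * diagonal σ * Vᵀ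

namespace Matrix

theorem transpose_mul_self_eq_add_of_orthonormal {R : Type*} [CommRing R] {m k l : Type*}
    [Fintype m] [Fintype k] [DecidableEq k] {P : Matrix m k R} (hP : Pᵀ * P = 1)
    (X : Matrix m l R) :
    Xᵀ * X = (Pᵀ * X)ᵀ * (Pᵀ * X) + (X - P * (Pᵀ * X))ᵀ * (X - P * (Pᵀ * X)) := by
  have hPP (Z : Matrix k l R) : Pᵀ * (P * Z) = Z := by rw [← Matrix.mul_assoc, hP, Matrix.one_mul]
  simp only [transpose_sub, transpose_mul, transpose_transpose, Matrix.sub_mul, Matrix.mul_sub,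
    Matrix.mul_assoc, hPP]
  abel

theorem rank_mul_mul_transpose_of_orthonormal {R : Type*} [CommRing R] [Nontrivial R]
    {m n k l : Type*} [Fintype m] [Fintype n] [Fintype k] [Fintype l] [DecidableEq k]
    [DecidableEq l] {U : Matrix m k R} {V : Matrix n l R} (hU : Uᵀ * U = 1) (hV : Vᵀ * V = 1)
    (X : Matrix k l R) : (U * X * Vᵀ).rank = X.rank := by
  refine le_antisymm ((rank_mul_le_left _ _).trans (rank_mul_le_right _ _)) ?_
  calc X.rank = (Uᵀ * (U * X * Vᵀ) * V).rank := by
        simp only [Matrix.mul_assoc, hV, Matrix.mul_one, ← Matrix.mul_assoc Uᵀ, hU, Matrix.one_mul]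
    _ ≤ (U * X * Vᵀ).rank := (rank_mul_le_left _ _).trans (rank_mul_le_right _ _)

theorem diag_transpose_mul_self_nonneg {m k : Type*} [Fintype m] (A : Matrix m k ℝ) (i : k) :
    0 ≤ (Aᵀ * A) i i :=
  Finset.sum_nonneg fun _ _ => mul_self_nonneg _

theorem eq_zero_of_diag_transpose_mul_self_eq_zero {m k : Type*} [Fintype m] {A : Matrix m k ℝ}
    {i : k} (h : (Aᵀ * A) i i = 0) (j : m) : A j i = 0 :=
  (Finset.sum_mul_self_eq_zero_iff _ _).mp h j (Finset.mem_univ j)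

theorem exists_orthonormal_mul_transpose_mul_eq {m n : Type*} [Fintype m] [Fintype n]
    [DecidableEq n] (B : Matrix m n ℝ) :
    ∃ Q : Matrix m (Fin B.rank) ℝ, Qᵀ * Q = 1 ∧ Q * (Qᵀ * B) = B := by
  set W := LinearMap.range (toEuclideanLin B)
  have hW : Module.finrank ℝ W = B.rank := by
    rw [rank_eq_finrank_range_toLin B (PiLp.basisFun 2 ℝ m) (PiLp.basisFun 2 ℝ n),
      ← toLpLin_eq_toLin]
  let b := (stdOrthonormalBasis ℝ W).reindex (finCongr hW)
  refine ⟨of fun i a => (b a : EuclideanSpace ℝ m) i, ?_, ?_⟩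
  · ext a a'
    have := orthonormal_iff_ite.mp b.orthonormal a a'
    rw [Submodule.coe_inner, PiLp.inner_apply] at this
    simp only [RCLike.inner_apply, conj_trivial] at this
    simp only [mul_apply, transpose_apply, of_apply, one_apply]
    rw [← this]
    exact Finset.sum_congr rfl fun _ _ => mul_comm _ _
  · ext i j
    have hcol : WithLp.toLp 2 (Bᵀ j) ∈ W := ⟨WithLp.toLp 2 (Pi.single j 1), by ext; simp⟩
    have := congrArg (fun x : W => (x : EuclideanSpace ℝ m) i) (b.sum_repr' ⟨_, hcol⟩)
    simpa [PiLp.inner_apply, mul_apply, mul_comm] using this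

end Matrix

section frobSq

variable {n m k : ℕ}

theorem frobSq_eq_trace (A : Matrix (Fin n) (Fin m) ℝ) : frobSq A = trace (Aᵀ * A) := by
  rw [frobSq, Finset.sum_comm]
  simp [trace, mul_apply, sq]

theorem frobSq_transpose (A : Matrix (Fin n) (Fin m) ℝ) : frobSq Aᵀ = frobSq A :=
  Finset.sum_comm

theorem frobSq_nonneg (A : Matrix (Fin n) (Fin m) ℝ) : 0 ≤ frobSq A :=
  Finset.sum_nonneg fun _ _ => Finset.sum_nonneg fun _ _ => sq_nonneg _

theorem frobSq_eq_zero_iff {A : Matrix (Fin n) (Fin m) ℝ} : frobSq A = 0 ↔ A = 0 := by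
  simp only [frobSq, Fintype.sum_eq_zero_iff_of_nonneg fun i => Finset.sum_nonneg fun j _ =>
    sq_nonneg (A i j), Fintype.sum_eq_zero_iff_of_nonneg fun _ => sq_nonneg _, funext_iff,
    Pi.zero_apply, sq_eq_zero_iff, ← Matrix.ext_iff, Matrix.zero_apply]

theorem frobSq_eq_add_of_orthonormal {P : Matrix (Fin n) (Fin k) ℝ} (hP : Pᵀ * P = 1)
    (X : Matrix (Fin n) (Fin m) ℝ) :
    frobSq X = frobSq (Pᵀ * X) + frobSq (X - P * (Pᵀ * X)) := by
  rw [frobSq_eq_trace, transpose_mul_self_eq_add_of_orthonormal hP, trace_add,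
    frobSq_eq_trace, frobSq_eq_trace]

theorem frobSq_orthonormal_mul {P : Matrix (Fin n) (Fin k) ℝ} (hP : Pᵀ * P = 1)
    (X : Matrix (Fin k) (Fin m) ℝ) : frobSq (P * X) = frobSq X := by
  rw [frobSq_eq_trace, frobSq_eq_trace, transpose_mul, Matrix.mul_assoc, ← Matrix.mul_assoc Pᵀ,
    hP, Matrix.one_mul]

theorem frobSq_mul_diagonal_mul_transpose {V : Matrix (Fin m) (Fin k) ℝ} (hV : Vᵀ * V = 1)
    (A : Matrix (Fin n) (Fin k) ℝ) (w : Fin k → ℝ) :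
    frobSq (A * diagonal w * Vᵀ) = ∑ i, w i ^ 2 * (Aᵀ * A) i i := by
  rw [← frobSq_transpose, transpose_mul, transpose_transpose, frobSq_orthonormal_mul hV,
    frobSq]
  simp only [transpose_apply, mul_diagonal]
  simp only [mul_apply, transpose_apply, Finset.mul_sum]
  exact Finset.sum_congr rfl fun i _ => Finset.sum_congr rfl fun j _ => by ring

end frobSq

theorem min_le_mul_one_sub_add_mul {α : Type*} [CommRing α] [LinearOrder α]
    [IsStrictOrderedRing α] {a b t : α} (ht₀ : 0 ≤ t) (ht₁ : t ≤ 1) :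
    min a b ≤ a * (1 - t) + b * t := by
  nlinarith [min_le_left a b, min_le_right a b]

theorem eq_ite_of_mul_one_sub_add_mul_eq_min {α : Type*} [CommRing α] [LinearOrder α]
    [IsStrictOrderedRing α] {a b t : α} (hab : a ≠ b) (h : a * (1 - t) + b * t = min a b) :
    t = if b < a then 1 else 0 := by
  split_ifs with hba
  · rw [min_eq_right hba.le] at h
    have : (a - b) * (1 - t) = 0 := by linear_combination h
    linear_combination -(mul_eq_zero.mp this).resolve_left (sub_ne_zero.mpr hab)
  · rw [min_eq_left (not_lt.mp hba)] at h
    have : (b - a) * t = 0 := by linear_combination h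
    exact (mul_eq_zero.mp this).resolve_left (sub_ne_zero.mpr hab.symm)

section Projection

variable {n m k r : ℕ} {U : Matrix (Fin n) (Fin k) ℝ} {Q : Matrix (Fin n) (Fin r) ℝ}

theorem frobSq_sub_eq_add_of_mul_transpose_mul_eq (hQ : Qᵀ * Q = 1)
    {B : Matrix (Fin n) (Fin m) ℝ} (hB : Q * (Qᵀ * B) = B) (Y : Matrix (Fin n) (Fin m) ℝ) :
    frobSq (Y - B) = frobSq (Y - Q * (Qᵀ * Y)) + frobSq (Q * (Qᵀ * Y) - B) := by
  have hproj : Q * (Qᵀ * (Y - B)) = Q * (Qᵀ * Y) - B := by rw [Matrix.mul_sub, Matrix.mul_sub, hB]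
  rw [frobSq_eq_add_of_orthonormal hQ (Y - B), ← frobSq_orthonormal_mul hQ, hproj,
    sub_sub_sub_cancel_right, add_comm]

theorem transpose_mul_self_sub_mul_transpose_mul (hU : Uᵀ * U = 1) (hQ : Qᵀ * Q = 1) :
    (U - Q * (Qᵀ * U))ᵀ * (U - Q * (Qᵀ * U)) = 1 - (Qᵀ * U)ᵀ * (Qᵀ * U) := by
  rw [eq_sub_iff_add_eq', ← hU]
  exact (transpose_mul_self_eq_add_of_orthonormal hQ U).symm

theorem diag_transpose_mul_self_transpose_mul_le_one (hU : Uᵀ * U = 1) (hQ : Qᵀ * Q = 1)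
    (i : Fin k) : ((Qᵀ * U)ᵀ * (Qᵀ * U)) i i ≤ 1 := by
  have := diag_transpose_mul_self_nonneg (U - Q * (Qᵀ * U)) i
  rw [transpose_mul_self_sub_mul_transpose_mul hU hQ, Matrix.sub_apply, one_apply_eq] at this
  linarith

theorem frobSq_sub_mul_transpose_mul {V : Matrix (Fin m) (Fin k) ℝ} (hU : Uᵀ * U = 1)
    (hV : Vᵀ * V = 1) (hQ : Qᵀ * Q = 1) (σ : Fin k → ℝ) :
    frobSq (U * diagonal σ * Vᵀ - Q * (Qᵀ * (U * diagonal σ * Vᵀ)))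
      = ∑ i, σ i ^ 2 * (1 - ((Qᵀ * U)ᵀ * (Qᵀ * U)) i i) := by
  have hres : U * diagonal σ * Vᵀ - Q * (Qᵀ * (U * diagonal σ * Vᵀ))
      = (U - Q * (Qᵀ * U)) * diagonal σ * Vᵀ := by
    simp only [Matrix.sub_mul, Matrix.mul_assoc]
  rw [hres, frobSq_mul_diagonal_mul_transpose hV, transpose_mul_self_sub_mul_transpose_mul hU hQ]
  simp only [Matrix.sub_apply, one_apply_eq]

theorem natCast_eq_sum_add_frobSq (hU : Uᵀ * U = 1) (hQ : Qᵀ * Q = 1) :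
    (r : ℝ) = ∑ i, ((Qᵀ * U)ᵀ * (Qᵀ * U)) i i + frobSq (Q - U * (Uᵀ * Q)) := by
  have hr : (r : ℝ) = frobSq Q := by rw [frobSq_eq_trace, hQ, trace_one, Fintype.card_fin]
  have hUQ : Uᵀ * Q = (Qᵀ * U)ᵀ := by rw [transpose_mul, transpose_transpose]
  rw [hr, frobSq_eq_add_of_orthonormal hU Q, hUQ, frobSq_transpose, frobSq_eq_trace]
  rfl

theorem frobSq_sub_add_mul_natCast_eq {V : Matrix (Fin m) (Fin k) ℝ} (hU : Uᵀ * U = 1)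
    (hV : Vᵀ * V = 1) (hQ : Qᵀ * Q = 1) {B : Matrix (Fin n) (Fin m) ℝ} (hB : Q * (Qᵀ * B) = B)
    (σ : Fin k → ℝ) (lam : ℝ) :
    frobSq (U * diagonal σ * Vᵀ - B) + lam ^ 2 * r
      = ∑ i, (σ i ^ 2 * (1 - ((Qᵀ * U)ᵀ * (Qᵀ * U)) i i) + lam ^ 2 * ((Qᵀ * U)ᵀ * (Qᵀ * U)) i i)
        + frobSq (Q * (Qᵀ * (U * diagonal σ * Vᵀ)) - B) + lam ^ 2 * frobSq (Q - U * (Uᵀ * Q)) := by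
  rw [frobSq_sub_eq_add_of_mul_transpose_mul_eq hQ hB, frobSq_sub_mul_transpose_mul hU hV hQ,
    natCast_eq_sum_add_frobSq hU hQ, Finset.sum_add_distrib, ← Finset.mul_sum]
  ring

theorem mul_transpose_mul_eq_mul_diagonal_of_diag (hU : Uᵀ * U = 1) (hQ : Qᵀ * Q = 1)
    {p : Fin k → Prop} [DecidablePred p]
    (h : ∀ i, ((Qᵀ * U)ᵀ * (Qᵀ * U)) i i = if p i then 1 else 0)
    (σ : Fin k → ℝ) (V : Matrix (Fin m) (Fin k) ℝ) :
    Q * (Qᵀ * (U * diagonal σ * Vᵀ)) = U * diagonal (fun i => if p i then σ i else 0) * Vᵀ := by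
  have hcols : Q * (Qᵀ * U) = U * diagonal fun i => if p i then (1 : ℝ) else 0 := by
    ext j i
    rw [mul_diagonal]
    split_ifs with hi
    · have hzero : ((U - Q * (Qᵀ * U))ᵀ * (U - Q * (Qᵀ * U))) i i = 0 := by
        rw [transpose_mul_self_sub_mul_transpose_mul hU hQ, Matrix.sub_apply, one_apply_eq, h,
          if_pos hi, sub_self]
      have hcol := eq_zero_of_diag_transpose_mul_self_eq_zero hzero j
      rw [Matrix.sub_apply, sub_eq_zero] at hcol
      rw [mul_one, hcol]
    · have hzero := eq_zero_of_diag_transpose_mul_self_eq_zero ((h i).trans (if_neg hi))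
      rw [mul_zero, mul_apply]
      exact Finset.sum_eq_zero fun a _ => by rw [hzero a, mul_zero]
  calc Q * (Qᵀ * (U * diagonal σ * Vᵀ)) = Q * (Qᵀ * U) * diagonal σ * Vᵀ := by
        simp only [Matrix.mul_assoc]
    _ = _ := by
        rw [hcols, Matrix.mul_assoc U, diagonal_mul_diagonal]
        simp only [ite_mul, one_mul, zero_mul]

end Projection

theorem frobSq_sub_add_rank_eq_sum_min {n m k : ℕ} {U : Matrix (Fin n) (Fin k) ℝ}
    {V : Matrix (Fin m) (Fin k) ℝ} (hU : Uᵀ * U = 1) (hV : Vᵀ * V = 1) {σ : Fin k → ℝ}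
    (hσ : ∀ i, 0 ≤ σ i) {lam : ℝ} (hlam : 0 ≤ lam) :
    frobSq (U * diagonal σ * Vᵀ - U * diagonal (fun i => if lam < σ i then σ i else 0) * Vᵀ)
        + lam ^ 2 * ((U * diagonal (fun i => if lam < σ i then σ i else 0) * Vᵀ).rank : ℝ)
      = ∑ i, min (σ i ^ 2) (lam ^ 2) := by
  have hrank : ((diagonal fun i => if lam < σ i then σ i else 0).rank : ℝ)
      = ∑ i, if lam < σ i then 1 else 0 := by
    rw [rank_diagonal, Fintype.card_subtype, Finset.sum_boole]
    congr 3
    ext i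
    split_ifs with hi
    · simp [hi, (hlam.trans_lt hi).ne']
    · simp [hi]
  rw [← Matrix.sub_mul, ← Matrix.mul_sub, diagonal_sub, frobSq_mul_diagonal_mul_transpose hV,
    rank_mul_mul_transpose_of_orthonormal hU hV, hrank, Finset.mul_sum, ← Finset.sum_add_distrib]
  refine Finset.sum_congr rfl fun i _ => ?_
  rw [hU, one_apply_eq]
  split_ifs with hi
  · rw [min_eq_right (pow_le_pow_left₀ hlam hi.le 2)]
    ring
  · rw [min_eq_left (pow_le_pow_left₀ (hσ i) (not_lt.mp hi) 2)]
    ring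

/-- Singular-value hard-thresholding solves rank penalization: if no singular value of `Y`
equals `λ > 0`, then `B̂ = U diag(σ_i(Y)·1_{σ_i(Y)>λ}) Vᵀ` is the unique global minimizer of
`‖Y−B‖_F²/2 + (λ²/2)·rank(B)`. -/
theorem hard_thresholding_rank_penalty {n m : ℕ}
    (lam : ℝ) (hlam : 0 < lam)
    (Y : Matrix (Fin n) (Fin m) ℝ)
    (U : Matrix (Fin n) (Fin (min n m)) ℝ) (σ : Fin (min n m) → ℝ)
    (V : Matrix (Fin m) (Fin (min n m)) ℝ)
    (hY : IsSVD Y U σ V)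
    (hnotie : ∀ i, σ i ≠ lam) :
    ∀ B : Matrix (Fin n) (Fin m) ℝ,
      B ≠ U * diagonal (fun i => if lam < σ i then σ i else 0) * Vᵀ →
      frobSq (Y - U * diagonal (fun i => if lam < σ i then σ i else 0) * Vᵀ) / 2
          + lam ^ 2 / 2 * ((U * diagonal (fun i => if lam < σ i then σ i else 0) * Vᵀ).rank : ℝ)
        < frobSq (Y - B) / 2 + lam ^ 2 / 2 * (B.rank : ℝ) := by
  obtain ⟨hU, hV, -, hσ, rfl⟩ := hY
  intro B hB
  obtain ⟨Q, hQ, hQB⟩ := exists_orthonormal_mul_transpose_mul_eq B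
  have hvalue := frobSq_sub_add_mul_natCast_eq hU hV hQ hQB σ lam
  set t : Fin (min n m) → ℝ := fun i => ((Qᵀ * U)ᵀ * (Qᵀ * U)) i i
  have hcost (i) : min (σ i ^ 2) (lam ^ 2) ≤ σ i ^ 2 * (1 - t i) + lam ^ 2 * t i :=
    min_le_mul_one_sub_add_mul (diag_transpose_mul_self_nonneg _ i)
      (diag_transpose_mul_self_transpose_mul_le_one hU hQ i)
  have hsum := Finset.sum_le_sum fun i (_ : i ∈ Finset.univ) => hcost i
  have hF := frobSq_nonneg (Q * (Qᵀ * (U * diagonal σ * Vᵀ)) - B)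
  have hG := mul_nonneg (sq_nonneg lam) (frobSq_nonneg (Q - U * (Uᵀ * Q)))
  have hopt := frobSq_sub_add_rank_eq_sum_min hU hV hσ hlam.le
  suffices hne : ∑ i, min (σ i ^ 2) (lam ^ 2) ≠ frobSq (U * diagonal σ * Vᵀ - B) + lam ^ 2 * B.rank
  · linarith [lt_of_le_of_ne (by linarith) hne]
  intro heq
  have hti (i) : t i = if lam < σ i then 1 else 0 := by
    have hne : σ i ^ 2 ≠ lam ^ 2 := fun h => hnotie i ((sq_eq_sq₀ (hσ i) hlam.le).mp h)
    have hi := (Finset.sum_eq_sum_iff_of_le fun i _ => hcost i).mp (by linarith) i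
      (Finset.mem_univ i)
    simpa only [pow_lt_pow_iff_left₀ hlam.le (hσ i) two_ne_zero] using
      eq_ite_of_mul_one_sub_add_mul_eq_min hne hi.symm
  have hBproj : Q * (Qᵀ * (U * diagonal σ * Vᵀ)) = B :=
    sub_eq_zero.mp (frobSq_eq_zero_iff.mp (by linarith))
  exact hB (hBproj.symm.trans (mul_transpose_mul_eq_mul_diagonal_of_diag hU hQ hti σ V))
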